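/- arXiv:2410.07748 — 4 statements merged into one kernel-verified Lean document; each statement's English description precedes it below -/
import Mathlib

section
/- Let 1 ≤ p ≤ ∞, 1 ≤ q < ∞, let φ : [0,∞) → ℝ be a weight such that ∫₀^∞ r^{nq} e^{-qφ(r)} r dr < ∞ for every n ∈ ℕ₀ (so all monomials have finite norm), let μ be a positive Borel measure on (0,∞), and let C ≥ 0. Suppose that for every entire function f with ‖f‖_{p,q,φ} < ∞, the integral ∫_{(0,∞)} (1/t) |f(z/t)| dμ(t) is finite for every z ∈ ℂ and the function H_μ f(z) = ∫_{(0,∞)} (1/t) f(z/t) dμ(t) satisfies ‖H_μ f‖_{p,q,φ} ≤ C ‖f‖_{p,q,φ}. Then μ((0,1)) = 0 and ∫_{[1,∞)} (1/t) dμ(t) ≤ C. -/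
open MeasureTheory Set Filter
open scoped ENNReal Topology

/-! The monomial `z ↦ zⁿ` has positive finite norm and `H_μ` maps it to
`(∫ t^{-(n+1)} dμ(t)) zⁿ`, so the bound gives `∫ t^{-(n+1)} dμ(t) ≤ C` for every `n`.
For `n = 0` this is the integral bound; since `t^{-(n+1)} → ∞` on `(0,1)`, Fatou's lemma
then forces `μ((0,1)) = 0`. -/

/-- The integral mean `M_p(f,r)` over the circle of radius `r`, with
`M_∞(f,r) = sup_{0≤θ≤2π} |f(r e^{iθ})|`. -/
noncomputable def Mp (p : ℝ≥0∞) (f : ℂ → ℂ) (r : ℝ) : ℝ :=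
  if p = ⊤ then
    sSup ((fun θ : ℝ => ‖f ((r:ℂ) * Complex.exp ((θ:ℂ) * Complex.I))‖) ''
      Set.Icc 0 (2 * Real.pi))
  else
    ((1 / (2 * Real.pi)) *
        ∫ θ in (0:ℝ)..(2 * Real.pi),
          ‖f ((r:ℂ) * Complex.exp ((θ:ℂ) * Complex.I))‖ ^ p.toReal) ^
      (1 / p.toReal)

/-- The weighted mixed norm `‖f‖_{p,q,φ}` (with values in `[0,∞]`), for `1 ≤ q < ∞`. -/
noncomputable def mixedNorm (p : ℝ≥0∞) (q : ℝ) (φ : ℝ → ℝ) (f : ℂ → ℂ) : ℝ≥0∞ :=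
  (∫⁻ r in Set.Ioi (0:ℝ), ENNReal.ofReal (Mp p f r ^ q * Real.exp (-q * φ r) * r)) ^ (1 / q)

variable {p : ℝ≥0∞} {q : ℝ} {φ : ℝ → ℝ}

lemma Mp_eq_of_norm_eq (hp : p ≠ 0) {f : ℂ → ℂ} {r a : ℝ} (ha : 0 ≤ a)
    (hf : ∀ θ : ℝ, ‖f ((r:ℂ) * Complex.exp ((θ:ℂ) * Complex.I))‖ = a) :
    Mp p f r = a := by
  unfold Mp
  simp only [hf]
  split_ifs with htop
  · rw [Set.Nonempty.image_const ⟨0, by constructor <;> positivity⟩, csSup_singleton]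
  · have hpt : 0 < p.toReal := ENNReal.toReal_pos hp htop
    rw [intervalIntegral.integral_const, smul_eq_mul, sub_zero,
      show 1 / (2 * Real.pi) * (2 * Real.pi * a ^ p.toReal) = a ^ p.toReal by field_simp,
      ← Real.rpow_mul ha, mul_one_div_cancel hpt.ne', Real.rpow_one]

lemma Mp_const_mul_pow (hp : p ≠ 0) (c : ℂ) (n : ℕ) {r : ℝ} (hr : 0 ≤ r) :
    Mp p (fun z => c * z ^ n) r = ‖c‖ * r ^ n :=
  Mp_eq_of_norm_eq hp (by positivity) fun θ => by
    rw [norm_mul, norm_pow, norm_mul, Complex.norm_real, Complex.norm_exp_ofReal_mul_I,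
      Real.norm_of_nonneg hr, mul_one]

lemma mixedNorm_const_mul_pow (hp : p ≠ 0) (hq : 0 < q) (c : ℂ) (n : ℕ) :
    mixedNorm p q φ (fun z => c * z ^ n) = ENNReal.ofReal ‖c‖ *
      (∫⁻ r in Ioi (0:ℝ), ENNReal.ofReal (r ^ ((n : ℝ) * q) * Real.exp (-q * φ r) * r)) ^ (1 / q) := by
  have hpoint : ∀ r ∈ Ioi (0:ℝ),
      ENNReal.ofReal (Mp p (fun z => c * z ^ n) r ^ q * Real.exp (-q * φ r) * r) =
        ENNReal.ofReal (‖c‖ ^ q) * ENNReal.ofReal (r ^ ((n : ℝ) * q) * Real.exp (-q * φ r) * r) := by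
    intro r (hr : 0 < r)
    rw [Mp_const_mul_pow hp c n hr.le, Real.mul_rpow (norm_nonneg c) (by positivity),
      ← Real.rpow_natCast r n, ← Real.rpow_mul hr.le, ← ENNReal.ofReal_mul (by positivity)]
    ring_nf
  rw [mixedNorm, setLIntegral_congr_fun measurableSet_Ioi hpoint,
    lintegral_const_mul' _ _ ENNReal.ofReal_ne_top, ENNReal.mul_rpow_of_nonneg _ _ (by positivity),
    ← ENNReal.ofReal_rpow_of_nonneg (norm_nonneg c) hq.le, ← ENNReal.rpow_mul,
    mul_one_div_cancel hq.ne', ENNReal.rpow_one]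

lemma mixedNorm_pow (hp : p ≠ 0) (hq : 0 < q) (n : ℕ) :
    mixedNorm p q φ (fun z => z ^ n) =
      (∫⁻ r in Ioi (0:ℝ), ENNReal.ofReal (r ^ ((n : ℝ) * q) * Real.exp (-q * φ r) * r)) ^ (1 / q) := by
  simpa using mixedNorm_const_mul_pow (φ := φ) hp hq 1 n

lemma lintegral_rpow_mul_exp_pos (hφ : Continuous φ) (s : ℝ) :
    0 < ∫⁻ r in Ioi (0:ℝ), ENNReal.ofReal (r ^ s * Real.exp (-q * φ r) * r) := by
  rw [setLIntegral_pos_iff (by fun_prop)]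
  have hsupp : Ioi (0:ℝ) ⊆ Function.support
      (fun r : ℝ => ENNReal.ofReal (r ^ s * Real.exp (-q * φ r) * r)) := fun r (hr : 0 < r) =>
    (ENNReal.ofReal_pos.mpr (by positivity)).ne'
  rw [inter_eq_self_of_subset_right hsupp, Real.volume_Ioi]
  exact ENNReal.zero_lt_top

noncomputable def hausdorffOperator (μ : Measure ℝ) (f : ℂ → ℂ) (z : ℂ) : ℂ :=
  ∫ t in Ioi (0:ℝ), (1 / (t:ℂ)) * f (z / (t:ℂ)) ∂μ

lemma hausdorffOperator_pow (μ : Measure ℝ) (n : ℕ) :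
    hausdorffOperator μ (fun z => z ^ n) =
      fun z => ((∫ t in Ioi (0:ℝ), (1 / t) ^ (n + 1) ∂μ : ℝ) : ℂ) * z ^ n := by
  funext z
  have h : ∀ t : ℝ, 1 / (t:ℂ) * (z / t) ^ n = z ^ n * (((1 / t) ^ (n + 1) : ℝ) : ℂ) := by
    intro t; push_cast; ring
  simp only [hausdorffOperator, h]
  rw [integral_const_mul, integral_complex_ofReal, mul_comm]

lemma lintegral_inv_pow_le_of_mixedNorm_hausdorffOperator_pow_le (hp : p ≠ 0) (hq : 0 < q)
    (hφ : Continuous φ) {μ : Measure ℝ} {C : ℝ} {n : ℕ}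
    (hmoment : (∫⁻ r in Ioi (0:ℝ),
      ENNReal.ofReal (r ^ ((n : ℝ) * q) * Real.exp (-q * φ r) * r)) < ⊤)
    (hfin : ∫⁻ t in Ioi (0:ℝ), ENNReal.ofReal ((1 / t) ^ (n + 1)) ∂μ < ⊤)
    (hbound : mixedNorm p q φ (hausdorffOperator μ (fun z => z ^ n)) ≤
      ENNReal.ofReal C * mixedNorm p q φ (fun z => z ^ n)) :
    ∫⁻ t in Ioi (0:ℝ), ENNReal.ofReal ((1 / t) ^ (n + 1)) ∂μ ≤ ENNReal.ofReal C := by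
  have hnonneg : 0 ≤ᵐ[μ.restrict (Ioi 0)] fun t : ℝ => (1 / t) ^ (n + 1) :=
    ae_restrict_of_forall_mem measurableSet_Ioi fun t (ht : 0 < t) => by positivity
  have hintegral : ENNReal.ofReal (∫ t in Ioi (0:ℝ), (1 / t) ^ (n + 1) ∂μ) =
      ∫⁻ t in Ioi (0:ℝ), ENNReal.ofReal ((1 / t) ^ (n + 1)) ∂μ :=
    ofReal_integral_eq_lintegral_ofReal
      ⟨by fun_prop, (hasFiniteIntegral_iff_ofReal hnonneg).2 hfin⟩ hnonneg
  rw [hausdorffOperator_pow, mixedNorm_const_mul_pow hp hq, mixedNorm_pow hp hq,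
    Complex.norm_real, Real.norm_of_nonneg (integral_nonneg_of_ae hnonneg), hintegral] at hbound
  exact (ENNReal.mul_le_mul_iff_left
    (ENNReal.rpow_pos (lintegral_rpow_mul_exp_pos hφ _) hmoment.ne).ne'
    (ENNReal.rpow_lt_top_of_nonneg (by positivity) hmoment.ne).ne).1 hbound

lemma measure_Ioo_zero_one_eq_zero_of_lintegral_inv_pow_le {μ : Measure ℝ} {c : ℝ≥0∞}
    (hc : c ≠ ⊤) (h : ∀ n : ℕ, ∫⁻ t in Ioi (0:ℝ), ENNReal.ofReal ((1 / t) ^ (n + 1)) ∂μ ≤ c) :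
    μ (Ioo 0 1) = 0 := by
  have htop : ∀ t ∈ Ioo (0:ℝ) 1,
      Tendsto (fun n : ℕ => ENNReal.ofReal ((1 / t) ^ (n + 1))) atTop (𝓝 ⊤) := fun t ht =>
    ENNReal.tendsto_ofReal_atTop.comp <|
      (tendsto_pow_atTop_atTop_of_one_lt (one_lt_one_div ht.1 ht.2)).comp
        (tendsto_add_atTop_nat 1)
  have hfatou : ⊤ * μ (Ioo 0 1) ≤ c := calc
    ⊤ * μ (Ioo 0 1)
        = ∫⁻ t in Ioo 0 1, liminf (fun n : ℕ => ENNReal.ofReal ((1 / t) ^ (n + 1))) atTop ∂μ := by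
          rw [← setLIntegral_const]
          exact setLIntegral_congr_fun measurableSet_Ioo fun t ht => (htop t ht).liminf_eq.symm
      _ ≤ liminf (fun n : ℕ => ∫⁻ t in Ioo 0 1, ENNReal.ofReal ((1 / t) ^ (n + 1)) ∂μ) atTop :=
          lintegral_liminf_le fun n => by fun_prop
      _ ≤ c := liminf_le_of_frequently_le' <| Frequently.of_forall fun n =>
          (lintegral_mono_set Ioo_subset_Ioi_self).trans (h n)
  by_contra hμ
  exact hc (top_le_iff.1 (ENNReal.top_mul hμ ▸ hfatou))

theorem stmt9_general (p : ℝ≥0∞) (hp : 1 ≤ p) (q : ℝ) (hq : 1 ≤ q)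
    (φ : ℝ → ℝ) (hφ : ContDiff ℝ 1 φ)
    (hmono : ∀ n : ℕ,
      (∫⁻ r in Set.Ioi (0:ℝ),
        ENNReal.ofReal (r ^ ((n : ℝ) * q) * Real.exp (-q * φ r) * r)) < ⊤)
    (μ : Measure ℝ) (C : ℝ)
    (hbdd : ∀ f : ℂ → ℂ, Differentiable ℂ f → mixedNorm p q φ f < ⊤ →
      (∀ z : ℂ,
        (∫⁻ t in Set.Ioi (0:ℝ),
          ENNReal.ofReal ((1 / t) * ‖f (z / (t:ℂ))‖) ∂μ) < ⊤) ∧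
      mixedNorm p q φ (fun z => ∫ t in Set.Ioi (0:ℝ), (1 / (t:ℂ)) * f (z / (t:ℂ)) ∂μ) ≤
        ENNReal.ofReal C * mixedNorm p q φ f) :
    μ (Set.Ioo 0 1) = 0 ∧
      (∫⁻ t in Set.Ici (1:ℝ), ENNReal.ofReal (1 / t) ∂μ) ≤ ENNReal.ofReal C := by
  have hp0 : p ≠ 0 := (zero_lt_one.trans_le hp).ne'
  have hq0 : 0 < q := zero_lt_one.trans_le hq
  have key : ∀ n : ℕ,
      ∫⁻ t in Ioi (0:ℝ), ENNReal.ofReal ((1 / t) ^ (n + 1)) ∂μ ≤ ENNReal.ofReal C := by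
    intro n
    obtain ⟨hfin, hbound⟩ := hbdd (fun z => z ^ n) (differentiable_pow n) <| by
      rw [mixedNorm_pow hp0 hq0]
      exact ENNReal.rpow_lt_top_of_nonneg (by positivity) (hmono n).ne
    refine lintegral_inv_pow_le_of_mixedNorm_hausdorffOperator_pow_le hp0 hq0 hφ.continuous
      (hmono n) ?_ hbound
    refine (setLIntegral_congr_fun measurableSet_Ioi fun t (ht : 0 < t) => ?_).trans_lt (hfin 1)
    rw [norm_pow, norm_div, norm_one, Complex.norm_real, Real.norm_of_nonneg ht.le, pow_succ']
  refine ⟨measure_Ioo_zero_one_eq_zero_of_lintegral_inv_pow_le ENNReal.ofReal_ne_top key, ?_⟩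
  calc ∫⁻ t in Ici (1:ℝ), ENNReal.ofReal (1 / t) ∂μ
      ≤ ∫⁻ t in Ioi (0:ℝ), ENNReal.ofReal (1 / t) ∂μ :=
        lintegral_mono_set fun t (ht : 1 ≤ t) => zero_lt_one.trans_le ht
    _ ≤ ENNReal.ofReal C := by simpa using key 0

theorem stmt9 (p : ℝ≥0∞) (hp : 1 ≤ p) (q : ℝ) (hq : 1 ≤ q)
    (φ : ℝ → ℝ) (hφ : ContDiff ℝ 1 φ) (hφpos : ∀ r ≥ (0:ℝ), 0 < φ r)
    (hmono : ∀ n : ℕ,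
      (∫⁻ r in Set.Ioi (0:ℝ),
        ENNReal.ofReal (r ^ ((n : ℝ) * q) * Real.exp (-q * φ r) * r)) < ⊤)
    (μ : Measure ℝ) (hμ0 : μ (Set.Iic 0) = 0) (C : ℝ) (hC : 0 ≤ C)
    (hbdd : ∀ f : ℂ → ℂ, Differentiable ℂ f → mixedNorm p q φ f < ⊤ →
      (∀ z : ℂ,
        (∫⁻ t in Set.Ioi (0:ℝ),
          ENNReal.ofReal ((1 / t) * ‖f (z / (t:ℂ))‖) ∂μ) < ⊤) ∧
      mixedNorm p q φ (fun z => ∫ t in Set.Ioi (0:ℝ), (1 / (t:ℂ)) * f (z / (t:ℂ)) ∂μ) ≤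
        ENNReal.ofReal C * mixedNorm p q φ f) :
    μ (Set.Ioo 0 1) = 0 ∧
      (∫⁻ t in Set.Ici (1:ℝ), ENNReal.ofReal (1 / t) ∂μ) ≤ ENNReal.ofReal C :=
  stmt9_general p hp q hq φ hφ hmono μ C hbdd
end

section
/- Let μ be a positive Borel measure on (0,∞) with sup_{n∈ℕ₀} μ_n < ∞, where μ_n = ∫_{(0,∞)} t^{-(n+1)} dμ(t). Let f : ℂ → ℂ be entire with Taylor expansion f(z) = Σ_{n=0}^∞ a_n z^n. Then for every z ∈ ℂ the integral H_μ f(z) = ∫_{(0,∞)} (1/t) f(z/t) dμ(t) converges absolutely and H_μ f(z) = Σ_{n=0}^∞ μ_n a_n z^n; in particular H_μ f is entire with Taylor coefficients μ_n a_n. -/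
/-!
Expanding the integrand gives `(1/t) f(z/t) = ∑ₙ t^{-(n+1)} aₙ zⁿ`. An entire power series
converges absolutely everywhere, and the moments `μₙ` are bounded, so the norms of the terms
have summable integrals `∫ ‖t^{-(n+1)} aₙ zⁿ‖ dμ ≤ (supₘ μₘ) ‖aₙ‖ ‖z‖ⁿ`. Hence the sum and
the integral may be interchanged, which yields both the absolute convergence of `H_μ f(z)` and
`H_μ f(z) = ∑ₙ μₙ aₙ zⁿ`; a power series converging on all of `ℂ` is entire.
-/

open MeasureTheory Set Filter FormalMultilinearSeries
open scoped ENNReal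

section PowerSeries

variable {𝕜 : Type*} [NontriviallyNormedField 𝕜] {c : ℕ → 𝕜}

theorem radius_ofScalars_eq_top_of_forall_summable
    (h : ∀ z : 𝕜, Summable fun n => c n * z ^ n) :
    (ofScalars 𝕜 c).radius = ⊤ := by
  refine ENNReal.eq_top_of_forall_nnreal_le fun r => ?_
  obtain ⟨z, hz⟩ := NormedField.exists_lt_norm 𝕜 r
  have hle : (‖z‖₊ : ℝ≥0∞) ≤ (ofScalars 𝕜 c).radius := by
    refine (ofScalars 𝕜 c).le_radius_of_tendsto (l := 0) ?_
    simpa only [ofScalars_norm, norm_mul, norm_pow, coe_nnnorm, norm_zero] using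
      (h z).tendsto_atTop_zero.norm
  exact le_trans (by exact_mod_cast hz.le) hle

theorem summable_norm_mul_pow_of_forall_summable (h : ∀ z : 𝕜, Summable fun n => c n * z ^ n)
    (z : 𝕜) : Summable fun n => ‖c n * z ^ n‖ := by
  have := (ofScalars 𝕜 c).summable_norm_mul_pow (r := ‖z‖₊)
    (by rw [radius_ofScalars_eq_top_of_forall_summable h]; exact ENNReal.coe_lt_top)
  simpa only [ofScalars_norm, norm_mul, norm_pow, coe_nnnorm] using this

theorem differentiable_of_forall_hasSum [CompleteSpace 𝕜] {g : 𝕜 → 𝕜}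
    (hg : ∀ z, HasSum (fun n => c n * z ^ n) (g z)) : Differentiable 𝕜 g := by
  have hball : HasFPowerSeriesOnBall g (ofScalars 𝕜 c) 0 ⊤ :=
    { r_le := (radius_ofScalars_eq_top_of_forall_summable fun z => (hg z).summable).ge
      r_pos := ENNReal.zero_lt_top
      hasSum := fun {y} _ => by simpa only [ofScalars_apply_eq, smul_eq_mul, zero_add] using hg y }
  exact fun z => (hball.analyticAt_of_mem (by simp)).differentiableAt

end PowerSeries

namespace MeasureTheory

variable {X E : Type*} [MeasurableSpace X] {ν : Measure X} [NormedAddCommGroup E]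

theorem Integrable.of_hasSum_of_summable_integral_norm {G : ℕ → X → E} {F : X → E}
    (hG : ∀ n, Integrable (G n) ν) (hsum : Summable fun n => ∫ x, ‖G n x‖ ∂ν)
    (hF : ∀ᵐ x ∂ν, HasSum (fun n => G n x) (F x)) : Integrable F ν := by
  refine ⟨aestronglyMeasurable_of_tendsto_ae atTop
    (fun n => Finset.aestronglyMeasurable_fun_sum (Finset.range n) fun i _ => (hG i).1)
    (hF.mono fun x hx => hx.tendsto_sum_nat), ?_⟩
  calc ∫⁻ x, ‖F x‖ₑ ∂ν ≤ ∫⁻ x, ∑' n, ‖G n x‖ₑ ∂ν :=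
        lintegral_mono_ae (hF.mono fun x hx => hx.tsum_eq ▸ enorm_tsum_le_tsum_enorm)
    _ = ∑' n, ENNReal.ofReal (∫ x, ‖G n x‖ ∂ν) := by
        rw [lintegral_tsum fun n => (hG n).1.enorm]
        simp only [ofReal_integral_norm_eq_lintegral_enorm (hG _)]
    _ < ⊤ := by
        rw [← ENNReal.ofReal_tsum_of_nonneg
          (fun n => integral_nonneg fun _ => norm_nonneg _) hsum]
        exact ENNReal.ofReal_lt_top

theorem hasSum_integral_of_hasSum_of_summable_integral_norm [NormedSpace ℝ E]
    {G : ℕ → X → E} {F : X → E}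
    (hG : ∀ n, Integrable (G n) ν) (hsum : Summable fun n => ∫ x, ‖G n x‖ ∂ν)
    (hF : ∀ᵐ x ∂ν, HasSum (fun n => G n x) (F x)) :
    HasSum (fun n => ∫ x, G n x ∂ν) (∫ x, F x ∂ν) := by
  rw [integral_congr_ae (hF.mono fun x hx => hx.tsum_eq.symm)]
  exact hasSum_integral_of_summable_integral_norm hG hsum

theorem hasSum_integral_smul_of_iSup_lintegral_lt_top [NormedSpace ℝ E] [CompleteSpace E]
    {g : ℕ → X → ℝ}
    (hg : ∀ n, AEStronglyMeasurable (g n) ν) (hg_nonneg : ∀ n, 0 ≤ᵐ[ν] g n)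
    (hbdd : (⨆ n, ∫⁻ x, ENNReal.ofReal (g n x) ∂ν) < ⊤)
    {c : ℕ → E} (hc : Summable fun n => ‖c n‖) {F : X → E}
    (hF : ∀ᵐ x ∂ν, HasSum (fun n => g n x • c n) (F x)) :
    Integrable F ν ∧ HasSum (fun n => (∫ x, g n x ∂ν) • c n) (∫ x, F x ∂ν) := by
  set M := ⨆ n, ∫⁻ x, ENNReal.ofReal (g n x) ∂ν
  have hlint : ∀ n, ∫⁻ x, ‖g n x‖ₑ ∂ν ≤ M := fun n =>
    (lintegral_congr_ae ((hg_nonneg n).mono fun x hx => Real.enorm_eq_ofReal hx)).trans_le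
      (le_iSup (fun m => ∫⁻ x, ENNReal.ofReal (g m x) ∂ν) n)
  have hint : ∀ n, Integrable (g n) ν := fun n => ⟨hg n, (hlint n).trans_lt hbdd⟩
  have hG : ∀ n, Integrable (fun x => g n x • c n) ν := fun n => (hint n).smul_const (c n)
  have hsum : Summable fun n => ∫ x, ‖g n x • c n‖ ∂ν := by
    refine .of_nonneg_of_le (fun n => integral_nonneg fun _ => norm_nonneg _) (fun n => ?_)
      (hc.mul_left M.toReal)
    simp only [norm_smul, integral_mul_const]
    gcongr
    rw [integral_norm_eq_lintegral_enorm (hg n)]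
    exact ENNReal.toReal_mono hbdd.ne (hlint n)
  refine ⟨Integrable.of_hasSum_of_summable_integral_norm hG hsum hF, ?_⟩
  simpa only [integral_smul_const] using
    hasSum_integral_of_hasSum_of_summable_integral_norm hG hsum hF

end MeasureTheory

-- Also valid at `t = 0`, where both sides are junk zeros (`1 / 0 = 0`).
theorem hasSum_inv_mul_comp_div {f : ℂ → ℂ} {a : ℕ → ℂ}
    (hf : ∀ z, HasSum (fun n => a n * z ^ n) (f z)) (z : ℂ) (t : ℝ) :
    HasSum (fun n => (1 / t ^ (n + 1)) • (a n * z ^ n)) (1 / (t : ℂ) * f (z / t)) := by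
  have hterm (n : ℕ) :
      (1 / t ^ (n + 1)) • (a n * z ^ n) = 1 / (t : ℂ) * (a n * (z / t) ^ n) := by
    rw [Complex.real_smul]
    field_simp
    push_cast
    ring
  simpa only [hterm] using (hf (z / t)).mul_left (1 / (t : ℂ))

theorem stmt10_general (μ : Measure ℝ)
    (hsup : (⨆ n : ℕ, ∫⁻ t in Set.Ioi (0:ℝ), ENNReal.ofReal (1 / t ^ (n + 1)) ∂μ) < ⊤)
    (f : ℂ → ℂ) (a : ℕ → ℂ) (hf : ∀ z : ℂ, HasSum (fun n : ℕ => a n * z ^ n) (f z)) :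
    (∀ z : ℂ, IntegrableOn (fun t : ℝ => (1 / (t:ℂ)) * f (z / (t:ℂ))) (Set.Ioi 0) μ) ∧
    (∀ z : ℂ, HasSum
      (fun n : ℕ => ((∫ t in Set.Ioi (0:ℝ), 1 / t ^ (n + 1) ∂μ : ℝ) : ℂ) * a n * z ^ n)
      (∫ t in Set.Ioi (0:ℝ), (1 / (t:ℂ)) * f (z / (t:ℂ)) ∂μ)) ∧
    Differentiable ℂ (fun z => ∫ t in Set.Ioi (0:ℝ), (1 / (t:ℂ)) * f (z / (t:ℂ)) ∂μ) := by
  set moment : ℕ → ℝ := fun n => ∫ t in Ioi 0, 1 / t ^ (n + 1) ∂μ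
  have hkernel_nonneg (n : ℕ) : 0 ≤ᵐ[μ.restrict (Ioi 0)] fun t : ℝ => 1 / t ^ (n + 1) := by
    filter_upwards [ae_restrict_mem measurableSet_Ioi] with t (ht : 0 < t)
    positivity
  have key (z : ℂ) := hasSum_integral_smul_of_iSup_lintegral_lt_top
    (g := fun n t => 1 / t ^ (n + 1))
    (fun n => (measurable_const.div (measurable_id.pow_const _)).aestronglyMeasurable)
    hkernel_nonneg hsup
    (summable_norm_mul_pow_of_forall_summable (fun w => (hf w).summable) z)
    (ae_of_all _ (hasSum_inv_mul_comp_div hf z))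
  have hmoments (z : ℂ) : HasSum (fun n => (moment n : ℂ) * a n * z ^ n)
      (∫ t in Ioi 0, 1 / (t : ℂ) * f (z / t) ∂μ) := by
    simpa only [Complex.real_smul, ← mul_assoc] using (key z).2
  refine ⟨fun z => (key z).1, hmoments,
    differentiable_of_forall_hasSum (c := fun n => moment n * a n) fun z => ?_⟩
  simpa only [mul_assoc] using hmoments z

theorem stmt10 (μ : Measure ℝ) (hμ : μ (Set.Iic 0) = 0)
    (hsup : (⨆ n : ℕ, ∫⁻ t in Set.Ioi (0:ℝ), ENNReal.ofReal (1 / t ^ (n + 1)) ∂μ) < ⊤)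
    (f : ℂ → ℂ) (a : ℕ → ℂ) (hf : ∀ z : ℂ, HasSum (fun n : ℕ => a n * z ^ n) (f z)) :
    (∀ z : ℂ, IntegrableOn (fun t : ℝ => (1 / (t:ℂ)) * f (z / (t:ℂ))) (Set.Ioi 0) μ) ∧
    (∀ z : ℂ, HasSum
      (fun n : ℕ => ((∫ t in Set.Ioi (0:ℝ), 1 / t ^ (n + 1) ∂μ : ℝ) : ℂ) * a n * z ^ n)
      (∫ t in Set.Ioi (0:ℝ), (1 / (t:ℂ)) * f (z / (t:ℂ)) ∂μ)) ∧
    Differentiable ℂ (fun z => ∫ t in Set.Ioi (0:ℝ), (1 / (t:ℂ)) * f (z / (t:ℂ)) ∂μ) :=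
  stmt10_general μ hsup f a hf
end

section
/- Let 1 ≤ p ≤ ∞, 1 ≤ q < ∞, let φ : [0,∞) → ℝ be a weight with lim_{r→∞} r·φ'(r) = ∞, let δ > 1, and set ψ(r) = φ(r/δ). If (f_n) is a sequence of entire functions with sup_n ‖f_n‖_{p,q,ψ} < ∞ and f_n → 0 uniformly on every compact subset of ℂ, then lim_{n→∞} ‖f_n‖_{p,q,φ} = 0. -/
open MeasureTheory Set Filter
open scoped ENNReal Topology

open scoped NNReal

/-!
Split `∫ M_p(f_n,r)^q e^{-qφ(r)} r dr` at a large radius `R`. Since `r φ'(r) → ∞`, the mean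
value theorem gives `φ(r) - φ(r/δ) → ∞`, so for `r > R` the weight `e^{-qφ(r)}` is an arbitrarily
small multiple of `e^{-qψ(r)}`, and the tail is small uniformly in `n` by the bound on
`‖f_n‖_{p,q,ψ}`. On `(0, R]` the means `M_p(f_n, r)` tend to `0` uniformly because `f_n → 0`
uniformly on the disc of radius `R`, while `∫ e^{-qφ(r)} r dr < ∞`.
-/

theorem Mp_nonneg (p : ℝ≥0∞) (f : ℂ → ℂ) (r : ℝ) : 0 ≤ Mp p f r := by
  unfold Mp
  split
  · exact Real.sSup_nonneg fun x ⟨θ, _, hθ⟩ => hθ ▸ norm_nonneg _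
  · apply Real.rpow_nonneg
    have : 0 ≤ ∫ θ in (0:ℝ)..(2 * Real.pi),
        ‖f ((r:ℂ) * Complex.exp ((θ:ℂ) * Complex.I))‖ ^ p.toReal :=
      intervalIntegral.integral_nonneg (by positivity) fun θ _ => by positivity
    positivity

theorem Mp_le_of_norm_le {p : ℝ≥0∞} (hp : p ≠ 0) {f : ℂ → ℂ} {r s : ℝ} (hs : 0 ≤ s)
    (h : ∀ z : ℂ, ‖z‖ = |r| → ‖f z‖ ≤ s) : Mp p f r ≤ s := by
  have hθ (θ : ℝ) : ‖f ((r:ℂ) * Complex.exp ((θ:ℂ) * Complex.I))‖ ≤ s :=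
    h _ (by rw [norm_mul, Complex.norm_exp_ofReal_mul_I, Complex.norm_real, mul_one,
      Real.norm_eq_abs])
  unfold Mp
  split_ifs with htop
  · exact Real.sSup_le (fun x ⟨θ, _, hx⟩ => hx ▸ hθ θ) hs
  have hp0 : 0 < p.toReal := ENNReal.toReal_pos hp htop
  have h2π : (0:ℝ) < 2 * Real.pi := by positivity
  set F : ℝ → ℝ := fun θ => ‖f ((r:ℂ) * Complex.exp ((θ:ℂ) * Complex.I))‖ ^ p.toReal
  have hF_nonneg (θ : ℝ) : 0 ≤ F θ := by positivity
  have hF_le (θ : ℝ) : ‖F θ‖ ≤ s ^ p.toReal := by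
    rw [Real.norm_eq_abs, abs_of_nonneg (hF_nonneg θ)]
    exact Real.rpow_le_rpow (norm_nonneg _) (hθ θ) hp0.le
  have hint_nonneg : 0 ≤ ∫ θ in (0:ℝ)..(2 * Real.pi), F θ :=
    intervalIntegral.integral_nonneg h2π.le fun θ _ => hF_nonneg θ
  have hint_le : ∫ θ in (0:ℝ)..(2 * Real.pi), F θ ≤ s ^ p.toReal * (2 * Real.pi) := by
    have := intervalIntegral.norm_integral_le_of_norm_le_const (a := 0) (b := 2 * Real.pi)
      fun θ _ => hF_le θ
    rw [sub_zero, abs_of_pos h2π] at this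
    exact (le_abs_self _).trans this
  calc _ ≤ (s ^ p.toReal) ^ (1 / p.toReal) := by
        gcongr
        rw [one_div, inv_mul_le_iff₀ h2π]
        linarith
    _ = s := by rw [← Real.rpow_mul hs, mul_one_div_cancel hp0.ne', Real.rpow_one]

theorem TendstoUniformlyOn.eventually_Mp_le {ι : Type*} {l : Filter ι} {f : ι → ℂ → ℂ}
    {R : ℝ} (hf : TendstoUniformlyOn f 0 l (Metric.closedBall 0 R)) {p : ℝ≥0∞} (hp : p ≠ 0)
    {s : ℝ} (hs : 0 < s) : ∀ᶠ n in l, ∀ r, |r| ≤ R → Mp p (f n) r ≤ s := by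
  filter_upwards [Metric.tendstoUniformlyOn_iff.1 hf s hs] with n hn r hr
  refine Mp_le_of_norm_le hp hs.le fun z hz => ?_
  simpa using (hn z (by simpa [hz] using hr)).le

theorem lintegral_ofReal_Mp_rpow_mul (p : ℝ≥0∞) {q : ℝ} (hq : q ≠ 0) (φ : ℝ → ℝ)
    (f : ℂ → ℂ) :
    ∫⁻ r in Ioi 0, ENNReal.ofReal (Mp p f r ^ q) * ENNReal.ofReal (Real.exp (-q * φ r) * r) =
      mixedNorm p q φ f ^ q := by
  rw [mixedNorm, ← ENNReal.rpow_mul, one_div_mul_cancel hq, ENNReal.rpow_one]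
  refine lintegral_congr fun r => ?_
  rw [mul_assoc, ENNReal.ofReal_mul (Real.rpow_nonneg (Mp_nonneg p f r) q)]

theorem tendsto_sub_comp_div_atTop {φ : ℝ → ℝ} (hφ : Differentiable ℝ φ)
    (hC : Tendsto (fun r => r * deriv φ r) atTop atTop) {δ : ℝ} (hδ : 1 < δ) :
    Tendsto (fun r => φ r - φ (r / δ)) atTop atTop := by
  have hδ0 : 0 < δ := by linarith
  have hc : 0 < 1 - δ⁻¹ := sub_pos.2 (inv_lt_one_of_one_lt₀ hδ)
  refine tendsto_atTop.2 fun M => ?_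
  obtain ⟨R₀, hR₀⟩ :=
    (tendsto_atTop.1 hC (max (M / (1 - δ⁻¹)) 0)).exists_forall_of_atTop
  filter_upwards [eventually_ge_atTop (δ * max R₀ 1)] with r hr
  have hr' : max R₀ 1 ≤ r / δ := (le_div_iff₀' hδ0).2 hr
  have hr0 : 0 < r := (mul_pos hδ0 (lt_max_of_lt_right one_pos)).trans_le hr
  obtain ⟨ξ, hξ, hslope⟩ := exists_deriv_eq_slope φ (a := r / δ) (b := r) (div_lt_self hr0 hδ)
    hφ.continuous.continuousOn hφ.differentiableOn
  have hξM : max (M / (1 - δ⁻¹)) 0 ≤ ξ * deriv φ ξ :=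
    hR₀ ξ ((le_max_left _ _).trans (hr'.trans hξ.1.le))
  have hderiv : 0 ≤ deriv φ ξ :=
    nonneg_of_mul_nonneg_right ((le_max_right _ _).trans hξM) ((div_pos hr0 hδ0).trans hξ.1)
  calc M = (1 - δ⁻¹) * (M / (1 - δ⁻¹)) := (mul_div_cancel₀ _ hc.ne').symm
    _ ≤ (1 - δ⁻¹) * (r * deriv φ ξ) := by
        gcongr
        exact (le_max_left _ _).trans (hξM.trans (by gcongr; exact hξ.2.le))
    _ = φ r - φ (r / δ) := by
        rw [hslope, show r - r / δ = (1 - δ⁻¹) * r by ring]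
        field_simp
        exact mul_div_cancel_left₀ _ (sub_ne_zero.2 hδ.ne')

theorem eventually_ofReal_exp_mul_le {φ ψ : ℝ → ℝ} {q : ℝ} (hq : 0 < q)
    (h : Tendsto (fun r => φ r - ψ r) atTop atTop) {η : ℝ≥0} (hη : 0 < η) :
    ∀ᶠ r in atTop, ENNReal.ofReal (Real.exp (-q * φ r) * r) ≤
      η * ENNReal.ofReal (Real.exp (-q * ψ r) * r) := by
  have hexp : Tendsto (fun r => Real.exp (-q * (φ r - ψ r))) atTop (𝓝 0) :=
    Real.tendsto_exp_atBot.comp (h.const_mul_atTop_of_neg (neg_neg_of_pos hq))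
  filter_upwards [hexp.eventually (ge_mem_nhds (NNReal.coe_pos.2 hη)), eventually_ge_atTop 0]
    with r hr hr0
  calc ENNReal.ofReal (Real.exp (-q * φ r) * r)
      = ENNReal.ofReal (Real.exp (-q * (φ r - ψ r)) * (Real.exp (-q * ψ r) * r)) := by
        rw [← mul_assoc, ← Real.exp_add]
        ring_nf
    _ ≤ ENNReal.ofReal (η * (Real.exp (-q * ψ r) * r)) := by gcongr
    _ = η * ENNReal.ofReal (Real.exp (-q * ψ r) * r) := by
        rw [ENNReal.ofReal_mul η.coe_nonneg, ENNReal.ofReal_coe_nnreal]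

theorem tendsto_lintegral_mul_zero_of_uniform_of_tail {ι : Type*} {l : Filter ι}
    {μ : Measure ℝ} {g : ι → ℝ → ℝ≥0∞} {w v : ℝ → ℝ≥0∞} {C : ℝ≥0∞}
    (hw : ∫⁻ r, w r ∂μ ≠ ∞) (hC : C ≠ ∞) (hgv : ∀ n, ∫⁻ r, g n r * v r ∂μ ≤ C)
    (hwv : ∀ η : ℝ≥0, 0 < η → ∀ᶠ r in atTop, w r ≤ η * v r)
    (hg : ∀ R, ∀ η : ℝ≥0, 0 < η → ∀ᶠ n in l, ∀ᵐ r ∂μ, r ≤ R → g n r ≤ η) :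
    Tendsto (fun n => ∫⁻ r, g n r * w r ∂μ) l (𝓝 0) := by
  have hbound (η : ℝ≥0) (hη : 0 < η) :
      ∀ᶠ n in l, ∫⁻ r, g n r * w r ∂μ ≤ η * (∫⁻ r, w r ∂μ + C) := by
    obtain ⟨R, hR⟩ := (hwv η hη).exists_forall_of_atTop
    filter_upwards [hg R η hη] with n hn
    rw [← lintegral_add_compl _ (measurableSet_Iic (a := R)), compl_Iic, mul_add]
    gcongr
    · calc ∫⁻ r in Iic R, g n r * w r ∂μ ≤ ∫⁻ r in Iic R, η * w r ∂μ :=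
            lintegral_mono_ae <| (ae_restrict_iff' measurableSet_Iic).2 <|
              hn.mono fun r hr hrR => mul_le_mul_left (hr hrR) _
        _ ≤ η * ∫⁻ r, w r ∂μ := by
            rw [lintegral_const_mul' _ _ ENNReal.coe_ne_top]
            gcongr
            exact Measure.restrict_le_self
    · calc ∫⁻ r in Ioi R, g n r * w r ∂μ ≤ ∫⁻ r in Ioi R, η * (g n r * v r) ∂μ :=
            setLIntegral_mono' measurableSet_Ioi fun r hr => by
              rw [mul_left_comm]
              exact mul_le_mul_right (hR r hr.le) _
        _ ≤ η * C := by
            rw [lintegral_const_mul' _ _ ENNReal.coe_ne_top]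
            gcongr
            exact (setLIntegral_le_lintegral _ _).trans (hgv n)
  refine ENNReal.tendsto_nhds_zero.2 fun ε hε => ?_
  obtain ⟨η, hη, hηε⟩ := ENNReal.exists_nnreal_pos_mul_lt (ENNReal.add_ne_top.2 ⟨hw, hC⟩) hε.ne'
  exact (hbound η hη).mono fun n hn => hn.trans hηε.le

theorem stmt14_general (p : ℝ≥0∞) (hp : 1 ≤ p) (q : ℝ) (hq : 1 ≤ q)
    (φ : ℝ → ℝ) (hφ : ContDiff ℝ 1 φ)
    (hφint : (∫⁻ r in Set.Ioi (0:ℝ), ENNReal.ofReal (Real.exp (-q * φ r) * r)) < ⊤)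
    (hC : Tendsto (fun r => r * deriv φ r) atTop atTop)
    (δ : ℝ) (hδ : 1 < δ)
    (f : ℕ → ℂ → ℂ)
    (hbdd : (⨆ n : ℕ, mixedNorm p q (fun r => φ (r / δ)) (f n)) < ⊤)
    (hunif : ∀ K : Set ℂ, IsCompact K → TendstoUniformlyOn (fun n => f n) 0 atTop K) :
    Tendsto (fun n => mixedNorm p q φ (f n)) atTop (𝓝 0) := by
  have hq0 : 0 < q := by linarith
  have hp0 : p ≠ 0 := (zero_lt_one.trans_le hp).ne'
  have hψ (n : ℕ) : mixedNorm p q (fun r => φ (r / δ)) (f n) ^ q ≤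
      (⨆ n : ℕ, mixedNorm p q (fun r => φ (r / δ)) (f n)) ^ q := by
    gcongr
    exact le_iSup (fun n => mixedNorm p q (fun r => φ (r / δ)) (f n)) n
  have hMp (R : ℝ) (η : ℝ≥0) (hη : 0 < η) : ∀ᶠ n in atTop, ∀ᵐ r ∂volume.restrict (Ioi 0),
      r ≤ R → ENNReal.ofReal (Mp p (f n) r ^ q) ≤ η := by
    filter_upwards [(hunif _ (isCompact_closedBall 0 R)).eventually_Mp_le hp0
      (Real.rpow_pos_of_pos (NNReal.coe_pos.2 hη) q⁻¹)] with n hn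
    refine ae_restrict_of_forall_mem measurableSet_Ioi fun r (hr : 0 < r) hrR => ?_
    rw [← ENNReal.ofReal_coe_nnreal, ← Real.rpow_inv_rpow η.coe_nonneg hq0.ne']
    gcongr
    · exact Mp_nonneg _ _ _
    · exact hn r (abs_le.2 ⟨by linarith, hrR⟩)
  have hpow := tendsto_lintegral_mul_zero_of_uniform_of_tail hφint.ne
    (ENNReal.rpow_lt_top_of_nonneg hq0.le hbdd.ne).ne
    (fun n => (lintegral_ofReal_Mp_rpow_mul p hq0.ne' _ (f n)).trans_le (hψ n))
    (fun η hη => eventually_ofReal_exp_mul_le hq0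
      (tendsto_sub_comp_div_atTop (hφ.differentiable one_ne_zero) hC hδ) hη) hMp
  simp only [lintegral_ofReal_Mp_rpow_mul p hq0.ne'] at hpow
  simpa [Function.comp_def, ENNReal.rpow_rpow_inv hq0.ne',
    ENNReal.zero_rpow_of_pos (inv_pos.2 hq0)] using
    (ENNReal.continuous_rpow_const (y := q⁻¹)).tendsto 0 |>.comp hpow

theorem stmt14 (p : ℝ≥0∞) (hp : 1 ≤ p) (q : ℝ) (hq : 1 ≤ q)
    (φ : ℝ → ℝ) (hφ : ContDiff ℝ 1 φ) (hφpos : ∀ r ≥ (0:ℝ), 0 < φ r)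
    (hφint : (∫⁻ r in Set.Ioi (0:ℝ), ENNReal.ofReal (Real.exp (-q * φ r) * r)) < ⊤)
    (hC : Tendsto (fun r => r * deriv φ r) atTop atTop)
    (δ : ℝ) (hδ : 1 < δ)
    (f : ℕ → ℂ → ℂ) (hf : ∀ n, Differentiable ℂ (f n))
    (hbdd : (⨆ n : ℕ, mixedNorm p q (fun r => φ (r / δ)) (f n)) < ⊤)
    (hunif : ∀ K : Set ℂ, IsCompact K → TendstoUniformlyOn (fun n => f n) 0 atTop K) :
    Tendsto (fun n => mixedNorm p q φ (f n)) atTop (𝓝 0) :=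
  stmt14_general p hp q hq φ hφ hφint hC δ hδ f hbdd hunif
end

section
/- Let μ be a positive Borel measure on (0,∞) with μ((0,1)) = 0, ∫_{[1,∞)} (1/t) dμ(t) = 1, and μ((1,∞)) > 0. If f : ℂ → ℂ is entire and H_μ f(z) = f(z) for all z ∈ ℂ, where H_μ f(z) = ∫_{[1,∞)} (1/t) f(z/t) dμ(t), then f is constant. That is, the kernel of I − H_μ on entire functions consists only of the constant functions. -/
open MeasureTheory Set Metric
open scoped ENNReal

theorem stmt17 (μ : Measure ℝ) (hμ0 : μ (Set.Iic 0) = 0) (h01 : μ (Set.Ioo 0 1) = 0)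
    (hnorm : (∫⁻ t in Set.Ici (1:ℝ), ENNReal.ofReal (1 / t) ∂μ) = 1)
    (hpos : 0 < μ (Set.Ioi 1))
    (f : ℂ → ℂ) (hf : Differentiable ℂ f)
    (hint : ∀ z : ℂ, IntegrableOn (fun t : ℝ => (1 / (t:ℂ)) * f (z / (t:ℂ))) (Set.Ici 1) μ)
    (hfix : ∀ z : ℂ, (∫ t in Set.Ici (1:ℝ), (1 / (t:ℂ)) * f (z / (t:ℂ)) ∂μ) = f z) :
    ∃ c : ℂ, ∀ z, f z = c := by
  refine ⟨f 0, fun z => ?_⟩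
  set ν := μ.restrict (Set.Ici (1:ℝ)) with hν
  have hmem : ∀ᵐ t ∂ν, t ∈ Set.Ici (1:ℝ) := ae_restrict_mem measurableSet_Ici
  have hmeas1 : Measurable fun t : ℝ => 1 / t := measurable_one.div measurable_id
  have hlint : (∫⁻ t, ENNReal.ofReal (1 / t) ∂ν) = 1 := hnorm
  have hnn1 : ∀ᵐ t ∂ν, 0 ≤ 1 / t := by
    filter_upwards [hmem] with t ht
    have : (1:ℝ) ≤ t := ht
    positivity
  -- integrability of 1/t
  have hInt1 : Integrable (fun t : ℝ => 1 / t) ν := by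
    refine ⟨hmeas1.aestronglyMeasurable, ?_⟩
    have h : (∫⁻ t, ENNReal.ofReal ‖1 / t‖ ∂ν) = 1 := by
      rw [← hlint]
      refine lintegral_congr_ae ?_
      filter_upwards [hnn1] with t ht
      rw [Real.norm_of_nonneg ht]
    rw [hasFiniteIntegral_iff_norm, h]
    exact ENNReal.one_lt_top
  have hI1 : (∫ t, 1 / t ∂ν) = 1 := by
    rw [integral_eq_lintegral_of_nonneg_ae hnn1 hmeas1.aestronglyMeasurable, hlint,
      ENNReal.toReal_one]
  -- integrability of 1/t^2 and c₁ < 1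
  have hmeas2 : Measurable fun t : ℝ => 1 / t ^ 2 := measurable_one.div (measurable_id.pow_const 2)
  have hle21 : ∀ᵐ t ∂ν, ‖1 / t ^ 2‖ ≤ ‖1 / t‖ := by
    filter_upwards [hmem] with t ht
    have ht1 : (1:ℝ) ≤ t := ht
    have ht0 : (0:ℝ) < t := by linarith
    rw [Real.norm_of_nonneg (by positivity), Real.norm_of_nonneg (by positivity)]
    rw [div_le_div_iff₀ (by positivity) ht0]
    nlinarith
  have hInt2 : Integrable (fun t : ℝ => 1 / t ^ 2) ν :=
    Integrable.mono hInt1 hmeas2.aestronglyMeasurable hle21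
  set c₁ : ℝ := ∫ t, 1 / t ^ 2 ∂ν with hc₁def
  have hc₁lt : c₁ < 1 := by
    have hIsub : Integrable (fun t : ℝ => 1 / t - 1 / t ^ 2) ν := hInt1.sub hInt2
    have hnneg : 0 ≤ᵐ[ν] fun t : ℝ => 1 / t - 1 / t ^ 2 := by
      filter_upwards [hmem] with t ht
      have ht1 : (1:ℝ) ≤ t := ht
      have ht0 : (0:ℝ) < t := by linarith
      have : 1 / t ^ 2 ≤ 1 / t := by
        rw [div_le_div_iff₀ (by positivity) ht0]; nlinarith
      simp only [Pi.zero_apply]; linarith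
    have hdiff : 0 < ∫ t, (1 / t - 1 / t ^ 2) ∂ν := by
      rw [integral_pos_iff_support_of_nonneg_ae hnneg hIsub]
      have hsub : Set.Ioi (1:ℝ) ⊆ Function.support fun t => 1 / t - 1 / t ^ 2 := by
        intro t ht
        have ht1 : (1:ℝ) < t := ht
        have ht0 : (0:ℝ) < t := by linarith
        have : 1 / t ^ 2 < 1 / t := by
          rw [div_lt_div_iff₀ (by positivity) ht0]; nlinarith
        simp only [Function.mem_support]
        intro h; rw [sub_eq_zero] at h; rw [h] at this; exact lt_irrefl _ this
      have hν1 : ν (Set.Ioi 1) = μ (Set.Ioi 1) := by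
        rw [hν, Measure.restrict_apply measurableSet_Ioi,
          Set.inter_eq_left.2 (Set.Ioi_subset_Ici_self)]
      calc (0:ℝ≥0∞) < μ (Set.Ioi 1) := hpos
        _ = ν (Set.Ioi 1) := hν1.symm
        _ ≤ ν (Function.support fun t => 1 / t - 1 / t ^ 2) := measure_mono hsub
    have hsubint : (∫ t, (1 / t - 1 / t ^ 2) ∂ν) = 1 - c₁ := by
      rw [integral_sub hInt1 hInt2, hI1]
    rw [hsubint] at hdiff; linarith
  have hc₁nn : 0 ≤ c₁ := by
    refine integral_nonneg_of_ae ?_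
    filter_upwards [hmem] with t ht
    have : (1:ℝ) ≤ t := ht
    positivity
  -- convert ∫ (1/t : ℂ) to 1
  have hcast : (fun t : ℝ => (1 / (t:ℂ))) = fun t : ℝ => ((1 / t : ℝ) : ℂ) := by
    funext t; push_cast; ring
  have hIntC : Integrable (fun t : ℝ => (1 / (t:ℂ))) ν := by
    rw [hcast]; exact hInt1.ofReal
  have hIntC1 : (∫ t, (1 / (t:ℂ)) ∂ν) = 1 := by
    rw [hcast]
    have h : (∫ t, ((1 / t : ℝ) : ℂ) ∂ν) = ((∫ t, 1 / t ∂ν : ℝ) : ℂ) := integral_ofReal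
    rw [h, hI1, Complex.ofReal_one]
  -- fixed point equation for g = f - f 0
  have hgfix : ∀ w : ℂ, (∫ t, (1 / (t:ℂ)) * (f (w / t) - f 0) ∂ν) = f w - f 0 := by
    intro w
    have h1 : Integrable (fun t : ℝ => (1 / (t:ℂ)) * f (w / t)) ν := hint w
    have h2 : Integrable (fun t : ℝ => (1 / (t:ℂ)) * f 0) ν := hIntC.mul_const _
    have heq : (fun t : ℝ => (1 / (t:ℂ)) * (f (w / t) - f 0))
        = fun t : ℝ => (1 / (t:ℂ)) * f (w / t) - (1 / (t:ℂ)) * f 0 := by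
      funext t; ring
    rw [heq, integral_sub h1 h2, hfix w, integral_mul_const, hIntC1, one_mul]
  -- set up the radius and maximum
  set r : ℝ := ‖z‖ + 1 with hrdef
  have hr : 0 < r := by positivity
  obtain ⟨z₀, hz₀mem, hz₀max⟩ := (isCompact_closedBall (0:ℂ) r).exists_isMaxOn
    ⟨0, mem_closedBall_self hr.le⟩ ((hf.sub_const (f 0)).continuous.norm.continuousOn)
  set M : ℝ := ‖f z₀ - f 0‖ with hM
  have hMnn : 0 ≤ M := norm_nonneg _
  have hbound : ∀ w ∈ Metric.closedBall (0:ℂ) r, ‖f w - f 0‖ ≤ M := fun w hw => hz₀max hw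
  have hz₀r : ‖z₀‖ ≤ r := by simpa [Metric.mem_closedBall, dist_zero_right] using hz₀mem
  -- Schwarz-type inequality via the maximum principle for dslope f 0
  have hdsl : Differentiable ℂ (dslope f 0) := by
    have h := (Complex.differentiableOn_dslope (s := Set.univ) (c := (0:ℂ))
      Filter.univ_mem).2 hf.differentiableOn
    exact differentiableOn_univ.1 h
  have hkey : ∀ w ∈ Metric.closedBall (0:ℂ) r, ‖f w - f 0‖ ≤ M / r * ‖w‖ := by
    intro w hw
    have hds : ‖dslope f 0 w‖ ≤ M / r := by
      refine Complex.norm_le_of_forall_mem_frontier_norm_le (U := Metric.ball (0:ℂ) r) isBounded_ball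
        hdsl.diffContOnCl ?_ ?_
      · intro u hu
        rw [frontier_ball _ hr.ne'] at hu
        have hur : ‖u‖ = r := by simpa [mem_sphere_iff_norm] using hu
        have hune : u ≠ 0 := by
          intro h; rw [h, norm_zero] at hur; exact hr.ne hur
        rw [dslope_of_ne _ hune, slope_def_field, sub_zero, norm_div, hur]
        exact (div_le_div_iff_of_pos_right hr).2 (hbound u (sphere_subset_closedBall hu))
      · rw [closure_ball _ hr.ne']; exact hw
    calc ‖f w - f 0‖ = ‖w‖ * ‖dslope f 0 w‖ := by
          rw [← sub_smul_dslope f 0 w, sub_zero, norm_smul]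
      _ ≤ ‖w‖ * (M / r) := mul_le_mul_of_nonneg_left hds (norm_nonneg w)
      _ = M / r * ‖w‖ := mul_comm _ _
  -- main estimate
  have hb : ∀ᵐ (t : ℝ) ∂ν, ‖(1 / (t:ℂ)) * (f (z₀ / t) - f 0)‖ ≤ M * (1 / t ^ 2) := by
    filter_upwards [hmem] with t ht
    have ht1 : (1:ℝ) ≤ t := ht
    have ht0 : (0:ℝ) < t := by linarith
    have hnt : ‖(t:ℂ)‖ = t := by rw [Complex.norm_real, Real.norm_of_nonneg ht0.le]
    have hzt : (z₀ / (t:ℂ)) ∈ Metric.closedBall (0:ℂ) r := by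
      rw [Metric.mem_closedBall, dist_zero_right, norm_div, hnt]
      rw [div_le_iff₀ ht0]
      nlinarith [norm_nonneg z₀]
    have h1 := hkey _ hzt
    have hfrac : M / r * ‖z₀‖ ≤ M := by
      rw [div_mul_eq_mul_div, div_le_iff₀ hr]
      nlinarith
    calc ‖(1 / (t:ℂ)) * (f (z₀ / t) - f 0)‖
        = 1 / t * ‖f (z₀ / t) - f 0‖ := by
          rw [norm_mul, norm_div, norm_one, hnt]
      _ ≤ 1 / t * (M / r * ‖z₀ / (t:ℂ)‖) :=
          mul_le_mul_of_nonneg_left h1 (by positivity)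
      _ = 1 / t * (M / r * (‖z₀‖ / t)) := by rw [norm_div, hnt]
      _ = (M / r * ‖z₀‖) * (1 / t ^ 2) := by ring
      _ ≤ M * (1 / t ^ 2) := mul_le_mul_of_nonneg_right hfrac (by positivity)
  have hMle : M ≤ M * c₁ := by
    have h := norm_integral_le_of_norm_le (hInt2.const_mul M) hb
    rw [hgfix z₀] at h
    calc M = ‖f z₀ - f 0‖ := rfl
      _ ≤ ∫ t, M * (1 / t ^ 2) ∂ν := h
      _ = M * c₁ := integral_const_mul M _
  have hM0 : M = 0 := by nlinarith
  have hz : z ∈ Metric.closedBall (0:ℂ) r := by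
    rw [Metric.mem_closedBall, dist_zero_right]; linarith
  have : ‖f z - f 0‖ ≤ 0 := hM0 ▸ hbound z hz
  have h0 : f z - f 0 = 0 := norm_le_zero_iff.1 this
  exact sub_eq_zero.1 h0
end
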